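/- arXiv:2302.08786 — 3 statements merged into one kernel-verified Lean document; each statement's English description precedes it below -/
import Mathlib

section
/- For the 2×2 matrix A with rows (0.4, 0.6), (0.2, 0.5) and constraint vector b = (0.8, 0.5), the set of constrained eigenvalues of A (eigenvalues λ admitting a nonzero eigenvector x that also satisfies A⊙xᵀ ≥ bᵀ) is exactly the interval [1, 3/2]. -/
set_option maxHeartbeats 1000000 in
theorem example_constrained_eigenvalues :
    {lam : ℝ | 0 ≤ lam ∧ ∃ x₁ x₂ : ℝ, x₁ ∈ Set.Icc (0:ℝ) 1 ∧ x₂ ∈ Set.Icc (0:ℝ) 1 ∧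
      ¬(x₁ = 0 ∧ x₂ = 0) ∧
      min 0.4 x₁ + min 0.6 x₂ ≥ 0.8 ∧
      min 0.2 x₁ + min 0.5 x₂ ≥ 0.5 ∧
      min 0.4 x₁ + min 0.6 x₂ = lam * x₁ ∧
      min 0.2 x₁ + min 0.5 x₂ = lam * x₂} = Set.Icc 1 (3/2) := by
  ext lam
  simp only [Set.mem_setOf_eq, Set.mem_Icc]
  constructor
  · rintro ⟨hl, x₁, x₂, ⟨h1l, h1u⟩, ⟨h2l, h2u⟩, hnz, hc1, hc2, he1, he2⟩
    have hm1 : min (0.4:ℝ) x₁ ≤ 0.4 := min_le_left _ _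
    have hm2 : min (0.6:ℝ) x₂ ≤ 0.6 := min_le_left _ _
    have hm1' : min (0.4:ℝ) x₁ ≤ x₁ := min_le_right _ _
    have hm2' : min (0.6:ℝ) x₂ ≤ x₂ := min_le_right _ _
    have hx1 : (0.2:ℝ) ≤ x₁ := by linarith
    have hx2 : (0.4:ℝ) ≤ x₂ := by linarith
    rw [min_eq_left (by linarith : (0.2:ℝ) ≤ x₁)] at he2 hc2
    rcases le_total x₂ 0.5 with h5 | h5
    · rw [min_eq_right h5] at he2
      constructor
      · nlinarith [he2, hx2]
      · nlinarith [he2, hx2]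
    · rw [min_eq_left h5] at he2
      rcases le_total x₂ 0.6 with h6 | h6
      · constructor
        · nlinarith [he2, hl, h6]
        · nlinarith [he2, hl, h5]
      · rw [min_eq_left (by linarith : (0.6:ℝ) ≤ x₂)] at he1 hc1
        have hl76 : lam ≤ 7/6 := by nlinarith [he2, hl, h6]
        refine ⟨?_, by linarith⟩
        rcases le_total x₁ 0.4 with h4 | h4
        · rw [min_eq_right h4] at he1
          nlinarith [he1, hx1, hl76]
        · rw [min_eq_left h4] at he1
          nlinarith [he1, hl, h1u]
  · rintro ⟨hge, hle⟩
    have hl0 : (0:ℝ) < lam := by linarith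
    refine ⟨by linarith, ?_⟩
    rcases le_total lam (7/6) with h | h
    · refine ⟨1/lam, 7/(10*lam), ⟨by positivity, by rw [div_le_one hl0]; linarith⟩,
        ⟨by positivity, by rw [div_le_one (by positivity)]; linarith⟩, ?_, ?_, ?_, ?_, ?_⟩
      · rintro ⟨h1, -⟩
        exact absurd h1 (by positivity : (0:ℝ) < 1/lam).ne'
      all_goals
        simp only [min_eq_left (by rw [le_div_iff₀ hl0]; linarith : (0.4:ℝ) ≤ 1/lam),
            min_eq_left (by rw [le_div_iff₀ (by positivity)]; linarith : (0.6:ℝ) ≤ 7/(10*lam)),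
            min_eq_left (by rw [le_div_iff₀ hl0]; linarith : (0.2:ℝ) ≤ 1/lam),
            min_eq_left (by rw [le_div_iff₀ (by positivity)]; linarith : (0.5:ℝ) ≤ 7/(10*lam))]
      · norm_num
      · norm_num
      · field_simp
        norm_num
      · field_simp
        ring
    · rcases le_total lam (7/5) with h' | h'
      · have hx1a : (0.4:ℝ) ≤ (0.4*lam+0.7)/lam^2 := by
          rw [le_div_iff₀ (by positivity)]; nlinarith
        have hx2a : (0.5:ℝ) ≤ 7/(10*lam) := by
          rw [le_div_iff₀ (by positivity)]; linarith
        have hx2b : 7/(10*lam) ≤ (0.6:ℝ) := by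
          rw [div_le_iff₀ (by positivity)]; linarith
        have hc1h : (0.4:ℝ) ≤ 7/(10*lam) := by linarith
        refine ⟨(0.4*lam+0.7)/lam^2, 7/(10*lam), ⟨by positivity, ?_⟩,
          ⟨by positivity, by rw [div_le_one (by positivity)]; linarith⟩, ?_, ?_, ?_, ?_, ?_⟩
        · rw [div_le_one (by positivity)]; nlinarith [sq_nonneg (lam - 7/6)]
        · rintro ⟨h1, -⟩
          exact absurd h1 (by positivity : (0:ℝ) < (0.4*lam+0.7)/lam^2).ne'
        all_goals
          simp only [min_eq_left hx1a, min_eq_right hx2b,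
              min_eq_left (by linarith : (0.2:ℝ) ≤ (0.4*lam+0.7)/lam^2),
              min_eq_left hx2a]
        · linarith
        · norm_num
        · field_simp
          ring
        · field_simp
          ring
      · have hm1 : (0:ℝ) < lam - 1 := by linarith
        have hy0 : (0:ℝ) < 1/(5*(lam-1)) := by positivity
        have hya : (0.4:ℝ) ≤ 1/(5*(lam-1)) := by
          rw [le_div_iff₀ (by positivity)]; linarith
        have hyb : 1/(5*(lam-1)) ≤ (0.5:ℝ) := by
          rw [div_le_iff₀ (by positivity)]; linarith
        have hx1a : (0.4:ℝ) ≤ (0.4+1/(5*(lam-1)))/lam := by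
          rw [le_div_iff₀ hl0]; nlinarith
        have hx1b : (0.4+1/(5*(lam-1)))/lam ≤ 1 := by
          rw [div_le_one hl0]; linarith
        refine ⟨(0.4+1/(5*(lam-1)))/lam, 1/(5*(lam-1)), ⟨by positivity, hx1b⟩,
          ⟨le_of_lt hy0, by linarith⟩, ?_, ?_, ?_, ?_, ?_⟩
        · rintro ⟨h1, -⟩
          exact absurd h1 (by positivity : (0:ℝ) < (0.4+1/(5*(lam-1)))/lam).ne'
        all_goals
          simp only [min_eq_left hx1a, min_eq_right (by linarith : 1/(5*(lam-1)) ≤ (0.6:ℝ)),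
              min_eq_left (by linarith : (0.2:ℝ) ≤ (0.4+1/(5*(lam-1)))/lam),
              min_eq_right hyb]
        · linarith
        · linarith
        · field_simp
        · field_simp
          ring
end

section
/- For λ ∈ (1, ∞), the vector x = (0.2/(λ−1)², 0.2/(λ−1)) satisfies min(0.4, x_1) + min(0.6, x_2) = λx_1 and min(0.2, x_1) + min(0.5, x_2) = λx_2 whenever (√2+2)/2 ≤ λ ≤ 2. -/
theorem example_eigvec_family (lam : ℝ)
    (h1 : (Real.sqrt 2 + 2) / 2 ≤ lam) (h2 : lam ≤ 2) :
    min 0.4 (0.2 / (lam - 1) ^ 2) + min 0.6 (0.2 / (lam - 1)) =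
      lam * (0.2 / (lam - 1) ^ 2) ∧
    min 0.2 (0.2 / (lam - 1) ^ 2) + min 0.5 (0.2 / (lam - 1)) =
      lam * (0.2 / (lam - 1)) := by
  have hs : Real.sqrt 2 ≥ 1.4 := by
    rw [ge_iff_le, show (1.4:ℝ) = Real.sqrt (1.4^2) by rw [Real.sqrt_sq]; norm_num]
    exact Real.sqrt_le_sqrt (by norm_num)
  set t := lam - 1 with ht
  have htl : Real.sqrt 2 / 2 ≤ t := by simp only [ht]; linarith
  have ht0 : (0:ℝ) < t := by linarith
  have ht1 : t ≤ 1 := by linarith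
  have ht2 : (1:ℝ)/2 ≤ t^2 := by
    have : (Real.sqrt 2 / 2)^2 ≤ t^2 := by
      apply pow_le_pow_left₀ (by positivity) htl
    rw [div_pow, Real.sq_sqrt (by norm_num)] at this; linarith
  have h04 : (0.2:ℝ) / t^2 ≤ 0.4 := by
    rw [div_le_iff₀ (by positivity)]; linarith
  have h06 : (0.2:ℝ) / t ≤ 0.6 := by
    rw [div_le_iff₀ ht0]; nlinarith
  have h05 : (0.2:ℝ) / t ≤ 0.5 := by
    rw [div_le_iff₀ ht0]; nlinarith
  have h02 : (0.2:ℝ) ≤ 0.2 / t^2 := by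
    rw [le_div_iff₀ (by positivity)]; nlinarith
  rw [min_eq_right h04, min_eq_right h06, min_eq_left h02, min_eq_right h05]
  have hlam : lam = t + 1 := by rw [ht]; ring
  constructor
  · rw [hlam]; field_simp; ring
  · rw [hlam]; field_simp
end

section
/- For λ with 1 ≤ λ ≤ 7/6, the vector x = (1/λ, 0.7/λ) lies in [0,1]^2 and satisfies min(0.4, x_1) + min(0.6, x_2) = λx_1 and min(0.2, x_1) + min(0.5, x_2) = λx_2; moreover it satisfies the constraints min(0.4,x_1)+min(0.6,x_2) ≥ 0.8 and min(0.2,x_1)+min(0.5,x_2) ≥ 0.5. -/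
theorem example_constrained_eigvec_family (lam : ℝ) (h1 : 1 ≤ lam) (h2 : lam ≤ 7/6) :
    (1 / lam) ∈ Set.Icc (0:ℝ) 1 ∧ (0.7 / lam) ∈ Set.Icc (0:ℝ) 1 ∧
    min 0.4 (1 / lam) + min 0.6 (0.7 / lam) = lam * (1 / lam) ∧
    min 0.2 (1 / lam) + min 0.5 (0.7 / lam) = lam * (0.7 / lam) ∧
    min 0.4 (1 / lam) + min 0.6 (0.7 / lam) ≥ 0.8 ∧
    min 0.2 (1 / lam) + min 0.5 (0.7 / lam) ≥ 0.5 := by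
  have hpos : (0:ℝ) < lam := by linarith
  have hx1 : (0.4:ℝ) ≤ 1 / lam := by
    rw [le_div_iff₀ hpos]; nlinarith
  have hx2 : (0.6:ℝ) ≤ 0.7 / lam := by
    rw [le_div_iff₀ hpos]; nlinarith
  have h02 : (0.2:ℝ) ≤ 1 / lam := by linarith
  have h05 : (0.5:ℝ) ≤ 0.7 / lam := by linarith
  have e1 : lam * (1 / lam) = 1 := by field_simp
  have e2 : lam * (0.7 / lam) = 0.7 := by field_simp
  rw [min_eq_left hx1, min_eq_left hx2, min_eq_left h02, min_eq_left h05, e1, e2]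
  refine ⟨⟨by positivity, ?_⟩, ⟨by positivity, ?_⟩, by norm_num, by norm_num, by norm_num, by norm_num⟩
  · rw [div_le_one hpos]; linarith
  · rw [div_le_one hpos]; linarith
end
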